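/- arXiv:2504.17153 — 2 statements merged into one kernel-verified Lean document; each statement's English description precedes it below -/
import Mathlib

section
/- Let T > 0, let κ : [−T,T] → ℝ be continuous, let w be a Jacobi solution for κ on [−T,T] with w(−T) = 0, let q : [−T,T] → ℝ be C², and set f := q·w. Then ∫_{−T}^{T} ((f'(t))² − κ(t)(f(t))²) dt = (q(T))² w(T) w'(T) + ∫_{−T}^{T} (q'(t) w(t))² dt. -/
open Set MeasureTheory

/-!
For `f = q w` we have `f' = q' w + q w'`, and the Jacobi equation `w'' = -κ w` gives
`(q² w w')' = 2 q q' w w' + q² w'² - κ q² w² = (f')² - κ f² - (q' w)²`.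
Integrate over `[-T, T]`; the boundary term at `-T` vanishes because `w(-T) = 0`.
-/

/-- A Jacobi solution for `κ` on `[a,b]`: a function that is `C²` on `[a,b]` and
satisfies `z'' + κ z = 0` there (derivatives taken within the interval). -/
def IsJacobiOn (κ z : ℝ → ℝ) (a b : ℝ) : Prop :=
  ContDiffOn ℝ 2 z (Set.Icc a b) ∧
    ∀ t ∈ Set.Icc a b,
      derivWithin (derivWithin z (Set.Icc a b)) (Set.Icc a b) t + κ t * z t = 0

section

variable {a b x : ℝ} {κ w q : ℝ → ℝ}

theorem hasDerivAt_derivWithin_Icc {f : ℝ → ℝ} (hf : DifferentiableOn ℝ f (Icc a b))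
    (hx : x ∈ Ioo a b) : HasDerivAt f (derivWithin f (Icc a b) x) x :=
  (hf x (Ioo_subset_Icc_self hx)).hasDerivWithinAt.hasDerivAt (Icc_mem_nhds hx.1 hx.2)

theorem IsJacobiOn.derivWithin_derivWithin (hw : IsJacobiOn κ w a b) (hx : x ∈ Icc a b) :
    derivWithin (derivWithin w (Icc a b)) (Icc a b) x = -(κ x * w x) :=
  eq_neg_of_add_eq_zero_left (hw.2 x hx)

theorem IsJacobiOn.contDiffOn_derivWithin (hw : IsJacobiOn κ w a b) (hab : a < b) :
    ContDiffOn ℝ 1 (derivWithin w (Icc a b)) (Icc a b) :=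
  hw.1.derivWithin (uniqueDiffOn_Icc hab) le_rfl

theorem IsJacobiOn.continuousOn_mul (hw : IsJacobiOn κ w a b) (hab : a < b) :
    ContinuousOn (fun t => κ t * w t) (Icc a b) :=
  ((hw.contDiffOn_derivWithin hab).continuousOn_derivWithin (uniqueDiffOn_Icc hab)
    le_rfl).neg.congr fun _ ht => (neg_eq_iff_eq_neg.mpr (hw.derivWithin_derivWithin ht)).symm

theorem IsJacobiOn.hasDerivAt_sq_mul_mul_derivWithin (hw : IsJacobiOn κ w a b)
    (hq : DifferentiableOn ℝ q (Icc a b)) (hx : x ∈ Ioo a b) :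
    HasDerivAt (fun t => q t ^ 2 * w t * derivWithin w (Icc a b) t)
      ((derivWithin q (Icc a b) x * w x + q x * derivWithin w (Icc a b) x) ^ 2
        - κ x * (q x * w x) ^ 2 - (derivWithin q (Icc a b) x * w x) ^ 2) x := by
  have hab : a < b := hx.1.trans hx.2
  have hw' := (hw.contDiffOn_derivWithin hab).differentiableOn one_ne_zero
  have h := ((hasDerivAt_derivWithin_Icc hq hx).pow 2).mul
    (hasDerivAt_derivWithin_Icc (hw.1.differentiableOn two_ne_zero) hx)
    |>.mul (hasDerivAt_derivWithin_Icc hw' hx)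
  rw [hw.derivWithin_derivWithin (Ioo_subset_Icc_self hx)] at h
  exact h.congr_deriv (by simp only [Pi.mul_apply, Pi.pow_apply]; push_cast; ring)

theorem IsJacobiOn.integral_sq_derivWithin_mul_sub (hw : IsJacobiOn κ w a b)
    (hq : ContDiffOn ℝ 1 q (Icc a b)) (hab : a < b) :
    ∫ t in a..b, ((derivWithin q (Icc a b) t * w t + q t * derivWithin w (Icc a b) t) ^ 2
        - κ t * (q t * w t) ^ 2)
      = q b ^ 2 * w b * derivWithin w (Icc a b) b - q a ^ 2 * w a * derivWithin w (Icc a b) a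
        + ∫ t in a..b, (derivWithin q (Icc a b) t * w t) ^ 2 := by
  have hUD := uniqueDiffOn_Icc hab
  have hqc := hq.continuousOn
  have hq'c := hq.continuousOn_derivWithin hUD le_rfl
  have hwc := hw.1.continuousOn
  have hw'c := (hw.contDiffOn_derivWithin hab).continuousOn
  have hκf : ContinuousOn (fun t => κ t * (q t * w t) ^ 2) (Icc a b) :=
    ((hw.continuousOn_mul hab).mul ((hqc.pow 2).mul hwc)).congr fun _ _ => by
      simp only [Pi.mul_apply, Pi.pow_apply]
      ring
  have hq'w : ContinuousOn (fun t => (derivWithin q (Icc a b) t * w t) ^ 2) (Icc a b) :=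
    (hq'c.mul hwc).pow 2
  have hF : ContinuousOn (fun t =>
      (derivWithin q (Icc a b) t * w t + q t * derivWithin w (Icc a b) t) ^ 2
        - κ t * (q t * w t) ^ 2 - (derivWithin q (Icc a b) t * w t) ^ 2) (Icc a b) :=
    ((((hq'c.mul hwc).add (hqc.mul hw'c)).pow 2).sub hκf).sub hq'w
  have hFTC := intervalIntegral.integral_eq_sub_of_hasDerivAt_of_le hab.le
    (f := fun t => q t ^ 2 * w t * derivWithin w (Icc a b) t)
    (((hqc.pow 2).mul hwc).mul hw'c)
    (fun _ hx => hw.hasDerivAt_sq_mul_mul_derivWithin (hq.differentiableOn one_ne_zero) hx)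
    (hF.intervalIntegrable_of_Icc hab.le)
  beta_reduce at hFTC
  rw [← hFTC, ← intervalIntegral.integral_add (hF.intervalIntegrable_of_Icc hab.le)
    (hq'w.intervalIntegrable_of_Icc hab.le)]
  simp only [sub_add_cancel]

end

theorem indexForm_factorization_general
    (T : ℝ) (hT : 0 < T) (κ : ℝ → ℝ)
    (w q : ℝ → ℝ) (hw : IsJacobiOn κ w (-T) T) (hw0 : w (-T) = 0)
    (hq : ContDiffOn ℝ 2 q (Set.Icc (-T) T)) :
    (∫ t in (-T)..T, ((deriv (fun s => q s * w s) t) ^ 2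
        - κ t * (q t * w t) ^ 2))
      = (q T) ^ 2 * w T * derivWithin w (Set.Icc (-T) T) T
        + ∫ t in (-T)..T, (derivWithin q (Set.Icc (-T) T) t * w t) ^ 2 := by
  have hab : -T < T := by linarith
  have hderiv : ∀ t ∈ Ioo (-T) T, deriv (fun s => q s * w s) t
      = derivWithin q (Icc (-T) T) t * w t + q t * derivWithin w (Icc (-T) T) t :=
    fun t ht => ((hasDerivAt_derivWithin_Icc (hq.differentiableOn two_ne_zero) ht).mul
      (hasDerivAt_derivWithin_Icc (hw.1.differentiableOn two_ne_zero) ht)).deriv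
  calc _ = ∫ t in (-T)..T,
          ((derivWithin q (Icc (-T) T) t * w t + q t * derivWithin w (Icc (-T) T) t) ^ 2
            - κ t * (q t * w t) ^ 2) :=
        intervalIntegral.integral_congr_Ioo_of_le hab.le fun t ht => by simp only [hderiv t ht]
    _ = _ := by
        rw [hw.integral_sq_derivWithin_mul_sub (hq.of_le (by norm_num)) hab, hw0]
        ring

/-- Key index-form identity: if `w` is a Jacobi solution on `[-T,T]` with
`w(-T) = 0`, `q` is `C²` on `[-T,T]` and `f = q·w`, then
`∫ ((f')² - κ f²) = q(T)² w(T) w'(T) + ∫ (q' w)²`. -/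
theorem indexForm_factorization
    (T : ℝ) (hT : 0 < T) (κ : ℝ → ℝ) (hκ : ContinuousOn κ (Set.Icc (-T) T))
    (w q : ℝ → ℝ) (hw : IsJacobiOn κ w (-T) T) (hw0 : w (-T) = 0)
    (hq : ContDiffOn ℝ 2 q (Set.Icc (-T) T)) :
    (∫ t in (-T)..T, ((deriv (fun s => q s * w s) t) ^ 2
        - κ t * (q t * w t) ^ 2))
      = (q T) ^ 2 * w T * derivWithin w (Set.Icc (-T) T) T
        + ∫ t in (-T)..T, (derivWithin q (Set.Icc (-T) T) t * w t) ^ 2 :=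
  indexForm_factorization_general T hT κ w q hw hw0 hq
end

section
/- Let T > 0, let κ : [−T,T] → ℝ be continuous, and suppose there exist −T ≤ a < b ≤ T and a Jacobi solution z for κ on [−T,T] that is not identically zero with z(a) = z(b) = 0. Define f : [−T,T] → ℝ by f = z on [a,b] and f = 0 elsewhere. Then f is piecewise C², f is not identically zero, f(−T) = f(T) = 0, and I_κ(f) = 0. -/
open Set

/-- `f` is piecewise `C²` on `[a,b]`: continuous, and there is a partition
`a = t₀ < t₁ < ⋯ < tₙ = b` such that `f` is `C²` on each `[tᵢ, tᵢ₊₁]`. -/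
def PiecewiseC2On (f : ℝ → ℝ) (a b : ℝ) : Prop :=
  ContinuousOn f (Set.Icc a b) ∧
    ∃ (n : ℕ) (t : ℕ → ℝ), 0 < n ∧ t 0 = a ∧ t n = b ∧
      (∀ i, i < n → t i < t (i + 1)) ∧
      (∀ i, i < n → ContDiffOn ℝ 2 f (Set.Icc (t i) (t (i + 1))))

/-- The index form `I_κ(f) = ∫_a^b ((f')² - κ f²)`; the derivative `deriv f`
agrees a.e. with the (piecewise) derivative of `f`. -/
noncomputable def indexForm (κ f : ℝ → ℝ) (a b : ℝ) : ℝ :=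
  ∫ t in a..b, ((deriv f t) ^ 2 - κ t * (f t) ^ 2)

/-!
On `[a, b]` the cut-off function is `z`, whose index is the boundary term `[z z']ₐᵇ = 0`, since
`(z z')' = z'² + z z'' = z'² - κ z²`; outside `(a, b)` it vanishes together with its derivative.
It is not identically zero because a Jacobi solution vanishing on a whole subinterval has zero
Cauchy data there, hence vanishes everywhere by uniqueness for the linear system
`(z, z')' = (z', -κ z)`.
-/

open Filter Topology MeasureTheory

namespace IsJacobiOn

variable {κ z : ℝ → ℝ} {p q : ℝ}

lemma hasDerivAt (hz : IsJacobiOn κ z p q) {t : ℝ} (ht : t ∈ Ioo p q) :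
    HasDerivAt z (derivWithin z (Icc p q) t) t :=
  ((hz.1.differentiableOn (by norm_num)) t (Ioo_subset_Icc_self ht)).hasDerivWithinAt.hasDerivAt
    (Icc_mem_nhds ht.1 ht.2)

lemma contDiffOn_derivWithin_s3 (hz : IsJacobiOn κ z p q) (hpq : p < q) :
    ContDiffOn ℝ 1 (derivWithin z (Icc p q)) (Icc p q) :=
  hz.1.derivWithin (uniqueDiffOn_Icc hpq) (by norm_num)

lemma hasDerivAt_derivWithin (hz : IsJacobiOn κ z p q) {t : ℝ} (ht : t ∈ Ioo p q) :
    HasDerivAt (derivWithin z (Icc p q)) (-(κ t * z t)) t := by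
  have hd := ((hz.contDiffOn_derivWithin_s3 (ht.1.trans ht.2)).differentiableOn one_ne_zero t
    (Ioo_subset_Icc_self ht)).hasDerivWithinAt.hasDerivAt (Icc_mem_nhds ht.1 ht.2)
  rwa [eq_neg_of_add_eq_zero_left (hz.2 t (Ioo_subset_Icc_self ht))] at hd

lemma mono (hz : IsJacobiOn κ z p q) {a b : ℝ} (hpa : p ≤ a) (hab : a < b) (hbq : b ≤ q) :
    IsJacobiOn κ z a b := by
  have hsub : Icc a b ⊆ Icc p q := Icc_subset_Icc hpa hbq
  have hU : UniqueDiffOn ℝ (Icc a b) := uniqueDiffOn_Icc hab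
  have hzd := hz.1.differentiableOn (by norm_num)
  have hz'd := (hz.contDiffOn_derivWithin_s3 ((hpa.trans_lt hab).trans_le hbq)).differentiableOn
    one_ne_zero
  have hd : EqOn (derivWithin z (Icc a b)) (derivWithin z (Icc p q)) (Icc a b) := fun t ht =>
    derivWithin_subset hsub (hU t ht) (hzd t (hsub ht))
  refine ⟨hz.1.mono hsub, fun t ht => ?_⟩
  rw [derivWithin_congr hd (hd ht), derivWithin_subset hsub (hU t ht) (hz'd t (hsub ht))]
  exact hz.2 t (hsub ht)

lemma indexForm_eq_sub (hz : IsJacobiOn κ z p q) (hκ : ContinuousOn κ (Icc p q)) (hpq : p < q) :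
    indexForm κ z p q =
      z q * derivWithin z (Icc p q) q - z p * derivWithin z (Icc p q) p := by
  set z' := derivWithin z (Icc p q)
  have hz'c : ContinuousOn z' (Icc p q) := (hz.contDiffOn_derivWithin_s3 hpq).continuousOn
  have hint : IntervalIntegrable (fun t => z' t ^ 2 - κ t * z t ^ 2) volume p q :=
    ((hz'c.pow 2).sub (hκ.mul (hz.1.continuousOn.pow 2))).intervalIntegrable_of_Icc hpq.le
  calc indexForm κ z p q = ∫ t in p..q, (z' t ^ 2 - κ t * z t ^ 2) :=
        intervalIntegral.integral_congr_Ioo_of_le hpq.le fun t ht => by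
          rw [(hz.hasDerivAt ht).deriv]
    _ = z q * z' q - z p * z' p :=
        intervalIntegral.integral_eq_sub_of_hasDerivAt_of_le hpq.le (hz.1.continuousOn.mul hz'c)
          (fun t ht => ((hz.hasDerivAt ht).mul (hz.hasDerivAt_derivWithin ht)).congr_deriv
            (by ring)) hint

lemma eqOn_zero_of_deriv_eq_zero (hz : IsJacobiOn κ z p q) (hκ : ContinuousOn κ (Icc p q))
    {m : ℝ} (hm : m ∈ Ioo p q) (hzm : z m = 0) (hz'm : deriv z m = 0) :
    EqOn z 0 (Icc p q) := by
  have hpq : p < q := hm.1.trans hm.2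
  obtain ⟨C, hC⟩ := isCompact_Icc.exists_bound_of_continuousOn hκ
  have hlip : ∀ t ∈ Ioo p q,
      LipschitzWith (max C.toNNReal 1) (fun x : ℝ × ℝ => (x.2, -(κ t * x.1))) := by
    intro t ht
    have hκt : ‖κ t‖₊ ≤ C.toNNReal := by
      rw [← NNReal.coe_le_coe, coe_nnnorm, Real.coe_toNNReal']
      exact le_max_of_le_left (hC t (Ioo_subset_Icc_self ht))
    refine (LipschitzWith.prod_snd.prodMk
      ((lipschitzWith_smul (κ t)).comp LipschitzWith.prod_fst).neg).weaken ?_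
    rw [mul_one, max_comm]
    exact max_le_max hκt le_rfl
  have hsol : EqOn (fun t => (z t, derivWithin z (Icc p q) t)) 0 (Icc p q) :=
    ODE_solution_unique_of_mem_Icc (v := fun t x => (x.2, -(κ t * x.1))) (s := fun _ => univ)
      (fun t ht => (hlip t ht).lipschitzOnWith) hm
      (hz.1.continuousOn.prodMk (hz.contDiffOn_derivWithin_s3 hpq).continuousOn)
      (fun t ht => (hz.hasDerivAt ht).prodMk (hz.hasDerivAt_derivWithin ht))
      (fun _ _ => mem_univ _) continuousOn_const
      (fun t _ => (hasDerivAt_const t 0).congr_deriv (by simp [Prod.zero_eq_mk]))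
      (fun _ _ => mem_univ _)
      (by simp [hzm, (hz.hasDerivAt hm).deriv.symm.trans hz'm])
  exact fun t ht => congrArg Prod.fst (hsol ht)

lemma eqOn_zero_of_eqOn_zero_Icc (hz : IsJacobiOn κ z p q) (hκ : ContinuousOn κ (Icc p q))
    {a b : ℝ} (hpa : p ≤ a) (hab : a < b) (hbq : b ≤ q) (h : EqOn z 0 (Icc a b)) :
    EqOn z 0 (Icc p q) := by
  have hm : (a + b) / 2 ∈ Ioo a b := ⟨by linarith, by linarith⟩
  have hzero : z =ᶠ[𝓝 ((a + b) / 2)] 0 :=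
    eventually_of_mem (Ioo_mem_nhds hm.1 hm.2) fun t ht => h (Ioo_subset_Icc_self ht)
  exact hz.eqOn_zero_of_deriv_eq_zero hκ (Ioo_subset_Ioo hpa hbq hm) hzero.eq_of_nhds
    (by rw [hzero.deriv_eq, Pi.zero_def, deriv_const])

end IsJacobiOn

namespace PiecewiseC2On

variable {f : ℝ → ℝ} {p c q : ℝ}

lemma of_contDiffOn (hpq : p < q) (hf : ContDiffOn ℝ 2 f (Icc p q)) : PiecewiseC2On f p q := by
  refine ⟨hf.continuousOn, 1, fun i => if i = 0 then p else q, one_pos, rfl, rfl, ?_, ?_⟩ <;>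
    intro i hi <;> obtain rfl : i = 0 := by omega
  exacts [hpq, hf]

lemma extend_left (hpc : p ≤ c) (hf : ContDiffOn ℝ 2 f (Icc p c)) (h : PiecewiseC2On f c q) :
    PiecewiseC2On f p q := by
  rcases hpc.eq_or_lt with rfl | hpc
  · exact h
  obtain ⟨hcont, n, t, -, rfl, htn, hmono, hpieces⟩ := h
  refine ⟨(hf.continuousOn.union_of_isClosed hcont isClosed_Icc isClosed_Icc).mono
    Icc_subset_Icc_union_Icc, n + 1, fun | 0 => p | i + 1 => t i, n.succ_pos, rfl, htn, ?_,
    ?_⟩ <;> rintro (_ | i) hi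
  exacts [hpc, hmono i (by omega), hf, hpieces i (by omega)]

lemma extend_right (hcq : c ≤ q) (hf : ContDiffOn ℝ 2 f (Icc c q)) (h : PiecewiseC2On f p c) :
    PiecewiseC2On f p q := by
  rcases hcq.eq_or_lt with rfl | hcq
  · exact h
  obtain ⟨hcont, n, t, -, ht0, rfl, hmono, hpieces⟩ := h
  refine ⟨(hcont.union_of_isClosed hf.continuousOn isClosed_Icc isClosed_Icc).mono
    Icc_subset_Icc_union_Icc, n + 1, fun i => if i ≤ n then t i else q, n.succ_pos,
    by simp [ht0], by simp, ?_, ?_⟩ <;>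
    intro i hi <;> rcases (Nat.lt_succ_iff.1 hi).lt_or_eq with hi | rfl
  · simpa [hi.le, Nat.succ_le_of_lt hi] using hmono i hi
  · simpa using hcq
  · simpa [hi.le, Nat.succ_le_of_lt hi] using hpieces i hi
  · simpa using hf

end PiecewiseC2On

section

variable {E : Type*} [Zero E] {z : ℝ → E} {a b : ℝ}

lemma indicator_Icc_eqOn_zero_Iic (hza : z a = 0) : EqOn ((Icc a b).indicator z) 0 (Iic a) :=
  fun _ ht => indicator_apply_eq_zero.2 fun h => le_antisymm ht h.1 ▸ hza

lemma indicator_Icc_eqOn_zero_Ici (hzb : z b = 0) : EqOn ((Icc a b).indicator z) 0 (Ici b) :=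
  fun _ ht => indicator_apply_eq_zero.2 fun h => le_antisymm h.2 ht ▸ hzb

end

section

variable {E : Type*} [NormedAddCommGroup E] [NormedSpace ℝ E] {f : ℝ → E} {x : ℝ}

-- If `f` is not differentiable at `x`, `deriv f x` is the junk value `0`.
lemma deriv_eq_zero_of_eqOn_zero_Iic (h : EqOn f 0 (Iic x)) : deriv f x = 0 := by
  by_cases hd : DifferentiableAt ℝ f x
  · rw [← hd.derivWithin (uniqueDiffWithinAt_Iic x), derivWithin_congr h (h self_mem_Iic)]
    exact congrFun (derivWithin_fun_const _ _) x
  · exact deriv_zero_of_not_differentiableAt hd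

lemma deriv_eq_zero_of_eqOn_zero_Ici (h : EqOn f 0 (Ici x)) : deriv f x = 0 := by
  by_cases hd : DifferentiableAt ℝ f x
  · rw [← hd.derivWithin (uniqueDiffWithinAt_Ici x), derivWithin_congr h (h self_mem_Ici)]
    exact congrFun (derivWithin_fun_const _ _) x
  · exact deriv_zero_of_not_differentiableAt hd

lemma intervalIntegral.integral_eq_of_forall_notMem_Ioo {p a b q : ℝ} (hpa : p ≤ a)
    (hab : a ≤ b) (hbq : b ≤ q) (h : ∀ t ∉ Ioo a b, f t = 0) :
    ∫ t in p..q, f t = ∫ t in a..b, f t := by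
  rw [intervalIntegral.integral_of_le (hpa.trans (hab.trans hbq)),
    intervalIntegral.integral_of_le hab, integral_Ioc_eq_integral_Ioo,
    integral_Ioc_eq_integral_Ioo]
  exact setIntegral_eq_of_subset_of_forall_sdiff_eq_zero measurableSet_Ioo
    (Ioo_subset_Ioo hpa hbq) fun t ht => h t ht.2

end

lemma indexForm_indicator_Icc {κ z : ℝ → ℝ} {p a b q : ℝ} (hpa : p ≤ a) (hab : a ≤ b)
    (hbq : b ≤ q) (hza : z a = 0) (hzb : z b = 0) :
    indexForm κ ((Icc a b).indicator z) p q = indexForm κ z a b := by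
  set F := (Icc a b).indicator z
  have hvanish : ∀ t ∉ Ioo a b, deriv F t ^ 2 - κ t * F t ^ 2 = 0 := by
    intro t ht
    rcases le_or_gt t a with hta | hat
    · have h0 : EqOn F 0 (Iic t) := (indicator_Icc_eqOn_zero_Iic hza).mono (Iic_subset_Iic.2 hta)
      simp [deriv_eq_zero_of_eqOn_zero_Iic h0, h0 self_mem_Iic]
    · have htb : b ≤ t := not_lt.1 fun htb => ht ⟨hat, htb⟩
      have h0 : EqOn F 0 (Ici t) := (indicator_Icc_eqOn_zero_Ici hzb).mono (Ici_subset_Ici.2 htb)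
      simp [deriv_eq_zero_of_eqOn_zero_Ici h0, h0 self_mem_Ici]
  rw [indexForm, intervalIntegral.integral_eq_of_forall_notMem_Ioo hpa hab hbq hvanish]
  refine intervalIntegral.integral_congr_Ioo_of_le hab fun t ht => ?_
  have hFz : F =ᶠ[𝓝 t] z := eventually_of_mem (Ioo_mem_nhds ht.1 ht.2) fun s hs =>
    indicator_of_mem (Ioo_subset_Icc_self hs) z
  simp only [hFz.deriv_eq, hFz.eq_of_nhds]

theorem conjugate_points_null_vector_general
    (T : ℝ) (κ : ℝ → ℝ) (hκ : ContinuousOn κ (Set.Icc (-T) T))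
    (a b : ℝ) (haT : -T ≤ a) (hab : a < b) (hbT : b ≤ T)
    (z : ℝ → ℝ) (hz : IsJacobiOn κ z (-T) T)
    (hznz : ∃ t ∈ Set.Icc (-T) T, z t ≠ 0)
    (hza : z a = 0) (hzb : z b = 0)
    (f : ℝ → ℝ) (hf : ∀ t, f t = if t ∈ Set.Icc a b then z t else 0) :
    PiecewiseC2On f (-T) T ∧ (∃ t ∈ Set.Icc (-T) T, f t ≠ 0) ∧
      f (-T) = 0 ∧ f T = 0 ∧ indexForm κ f (-T) T = 0 := by
  obtain rfl : f = (Icc a b).indicator z :=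
    funext fun t => (hf t).trans (indicator_apply _ _ _).symm
  have hsub : Icc a b ⊆ Icc (-T) T := Icc_subset_Icc haT hbT
  have hfz : EqOn ((Icc a b).indicator z) z (Icc a b) := fun t ht => indicator_of_mem ht z
  have hf_left := indicator_Icc_eqOn_zero_Iic (b := b) hza
  have hf_right := indicator_Icc_eqOn_zero_Ici (a := a) hzb
  refine ⟨?_, ?_, hf_left haT, hf_right hbT, ?_⟩
  · exact ((PiecewiseC2On.of_contDiffOn hab ((hz.1.mono hsub).congr hfz)).extend_right hbT
      (contDiffOn_const.congr (hf_right.mono Icc_subset_Ici_self))).extend_left haT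
      (contDiffOn_const.congr (hf_left.mono Icc_subset_Iic_self))
  · obtain ⟨t, ht, hzt⟩ : ∃ t ∈ Icc a b, z t ≠ 0 := by
      by_contra! h
      obtain ⟨s, hs, hzs⟩ := hznz
      exact hzs (hz.eqOn_zero_of_eqOn_zero_Icc hκ haT hab hbT h hs)
    exact ⟨t, hsub ht, by rwa [hfz ht]⟩
  · rw [indexForm_indicator_Icc haT hab.le hbT hza hzb,
      (hz.mono haT hab hbT).indexForm_eq_sub (hκ.mono hsub) hab, hza, hzb]
    ring

/-- A nontrivial Jacobi solution vanishing at `a < b` inside `[-T,T]`, cut off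
outside `[a,b]`, is a nontrivial piecewise `C²` test function vanishing at the
endpoints whose index is zero. -/
theorem conjugate_points_null_vector
    (T : ℝ) (hT : 0 < T) (κ : ℝ → ℝ) (hκ : ContinuousOn κ (Set.Icc (-T) T))
    (a b : ℝ) (haT : -T ≤ a) (hab : a < b) (hbT : b ≤ T)
    (z : ℝ → ℝ) (hz : IsJacobiOn κ z (-T) T)
    (hznz : ∃ t ∈ Set.Icc (-T) T, z t ≠ 0)
    (hza : z a = 0) (hzb : z b = 0)
    (f : ℝ → ℝ) (hf : ∀ t, f t = if t ∈ Set.Icc a b then z t else 0) :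
    PiecewiseC2On f (-T) T ∧ (∃ t ∈ Set.Icc (-T) T, f t ≠ 0) ∧
      f (-T) = 0 ∧ f T = 0 ∧ indexForm κ f (-T) T = 0 :=
  conjugate_points_null_vector_general T κ hκ a b haT hab hbT z hz hznz hza hzb f hf
end
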